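/- There exists an ultrafilter U on ℕ such that every member A ∈ U is a Δ-set of positive upper density; consequently for every A ∈ U and every ℓ ∈ ℕ there is a triple {b, c, b + ℓc} ⊆ A. -/

import Mathlib

/-!
Consider the filter of sets whose complement has asymptotic density zero and the filter of sets
`B` such that every infinite set has an infinite subset `Y` with `Δ(Y) ⊆ B`. Their meet is proper:
a set of density one contains `Δ(Z)` for a greedily built infinite `Z`, and a member of the second
filter then contains `Δ(Y)` for an infinite `Y ⊆ Z`. An ultrafilter `U` above the meet works. A
member `A` of `U` has positive upper density, since otherwise `Aᶜ` lies in the first filter, and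
is a Δ-set, since otherwise, by Ramsey's theorem for pairs, `Aᶜ` lies in the second one.

For the triples, let `Δ(X) ⊆ A` and `k · d̄(A) > 1`. The translates `A - ℓx` for `k` points `x` of
`X` cannot be pairwise disjoint, so `b + ℓx, b + ℓy ∈ A` for some `x < y` in `X`, and
`(b + ℓx) + ℓ(y - x) = b + ℓy` with `y - x ∈ Δ(X)`.
-/

open scoped Classical

noncomputable def upperDensity (A : Set ℕ) : ℝ :=
  Filter.limsup (fun n => (((Finset.Icc 1 n).filter (fun m => m ∈ A)).card : ℝ) / n) Filter.atTop

noncomputable def lowerDensity (A : Set ℕ) : ℝ :=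
  Filter.liminf (fun n => (((Finset.Icc 1 n).filter (fun m => m ∈ A)).card : ℝ) / n) Filter.atTop

/-- The difference set Δ(X) = {x' - x : x, x' ∈ X, x' > x}. -/
def diffSet (X : Set ℕ) : Set ℕ := {d | ∃ x ∈ X, ∃ x' ∈ X, x < x' ∧ x' - x = d}

/-- A is thick if it contains arbitrarily long intervals of consecutive integers. -/
def Thick (A : Set ℕ) : Prop := ∀ k : ℕ, ∃ a : ℕ, ∀ i < k, a + i ∈ A

/-- A is a Δ-set if it contains the difference set of some infinite X. -/
def IsDeltaSet (A : Set ℕ) : Prop := ∃ X : Set ℕ, X.Infinite ∧ diffSet X ⊆ A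

open Filter Topology Set

noncomputable def counting (A : Set ℕ) (n : ℕ) : ℕ :=
  ((Finset.Icc 1 n).filter (fun m => m ∈ A)).card

/-- `upperDensity A` is definitionally `limsup (densityRatio A) atTop`. -/
noncomputable def densityRatio (A : Set ℕ) (n : ℕ) : ℝ := (counting A n : ℝ) / n

def HasDensityZero (A : Set ℕ) : Prop := Tendsto (densityRatio A) atTop (𝓝 0)

section Counting

variable (A B : Set ℕ) (n : ℕ)

theorem counting_le : counting A n ≤ n :=
  (Finset.card_filter_le _ _).trans_eq (by simp)

variable {A B} in
theorem counting_mono (h : A ⊆ B) : counting A n ≤ counting B n :=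
  Finset.card_le_card (Finset.monotone_filter_right _ fun _ _ hm => h hm)

theorem counting_union_le : counting (A ∪ B) n ≤ counting A n + counting B n := by
  simp only [counting, mem_union, Finset.filter_or]
  exact Finset.card_union_le _ _

theorem counting_shift_le (a : ℕ) : counting {x | a < x ∧ x - a ∈ A} n ≤ counting A n := by
  refine Finset.card_le_card_of_injOn (· - a) (fun x hx => ?_) fun x hx y hy hxy => ?_
  · simp only [Finset.coe_filter, Finset.mem_Icc, mem_ofPred_eq] at hx ⊢
    exact ⟨⟨by omega, by omega⟩, hx.2.2⟩
  · simp only [Finset.coe_filter, Finset.mem_Icc, mem_ofPred_eq] at hx hy hxy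
    omega

theorem counting_le_add_counting_preimage_add (t : ℕ) :
    counting A n ≤ t + counting ((· + t) ⁻¹' A) n := by
  have hcover : (Finset.Icc 1 n).filter (fun m => m ∈ A) ⊆
      Finset.Icc 1 t ∪ ((Finset.Icc 1 n).filter (fun m => m ∈ (· + t) ⁻¹' A)).image (· + t) := by
    intro m hm
    simp only [Finset.mem_filter, Finset.mem_Icc, Finset.mem_union, Finset.mem_image] at hm ⊢
    by_cases hmt : m ≤ t
    · exact Or.inl ⟨hm.1.1, hmt⟩
    · refine Or.inr ⟨m - t, ⟨⟨by omega, by omega⟩, ?_⟩, by omega⟩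
      show m - t + t ∈ A
      rw [Nat.sub_add_cancel (by omega)]; exact hm.2
  calc counting A n ≤ _ := Finset.card_le_card hcover
    _ ≤ _ := Finset.card_union_le _ _
    _ ≤ t + counting ((· + t) ⁻¹' A) n := by
      rw [Nat.card_Icc, Nat.add_sub_cancel]
      exact Nat.add_le_add_left Finset.card_image_le t

theorem densityRatio_nonneg : 0 ≤ densityRatio A n := by
  unfold densityRatio; positivity

theorem densityRatio_le_one : densityRatio A n ≤ 1 :=
  div_le_one_of_le₀ (by exact_mod_cast counting_le A n) n.cast_nonneg

theorem densityRatio_isBoundedUnder_le :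
    IsBoundedUnder (· ≤ ·) atTop (densityRatio A) :=
  isBoundedUnder_of ⟨1, densityRatio_le_one A⟩

theorem upperDensity_nonneg : 0 ≤ upperDensity A :=
  le_limsup_of_frequently_le (Frequently.of_forall (densityRatio_nonneg A))
    (densityRatio_isBoundedUnder_le A)

end Counting

section Density

variable {A B : Set ℕ}

theorem hasDensityZero_of_upperDensity_eq_zero (h : upperDensity A = 0) : HasDensityZero A :=
  tendsto_of_le_liminf_of_limsup_le
    (le_liminf_of_le (densityRatio_isBoundedUnder_le A).isCoboundedUnder_ge
      (Eventually.of_forall (densityRatio_nonneg A)))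
    h.le (densityRatio_isBoundedUnder_le A) (isBoundedUnder_of ⟨0, densityRatio_nonneg A⟩)

theorem upperDensity_le_of_counting_le {c C : ℝ} (h : ∀ n, (counting A n : ℝ) ≤ c * n + C) :
    upperDensity A ≤ c := by
  have hlim : Tendsto (fun n : ℕ => c + C / n) atTop (𝓝 c) := by
    simpa using ((tendsto_const_nhds (x := C)).div_atTop
      (tendsto_natCast_atTop_atTop (R := ℝ))).const_add c
  have hle : ∀ᶠ n : ℕ in atTop, densityRatio A n ≤ c + C / n := by
    filter_upwards [eventually_gt_atTop 0] with n hn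
    have hn : (0 : ℝ) < n := by exact_mod_cast hn
    rw [densityRatio, div_le_iff₀ hn, add_mul, div_mul_cancel₀ _ hn.ne']
    linarith [h n]
  calc upperDensity A ≤ limsup (fun n : ℕ => c + C / n) atTop :=
        limsup_le_limsup hle (isCoboundedUnder_le_of_le atTop (densityRatio_nonneg A))
          hlim.isBoundedUnder_le
    _ = c := hlim.limsup_eq

theorem HasDensityZero.of_counting_le (hB : HasDensityZero B)
    (h : ∀ n, counting A n ≤ counting B n) : HasDensityZero A :=
  squeeze_zero (densityRatio_nonneg A)
    (fun n => div_le_div_of_nonneg_right (by exact_mod_cast h n) n.cast_nonneg) hB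

theorem HasDensityZero.mono (hB : HasDensityZero B) (h : A ⊆ B) : HasDensityZero A :=
  hB.of_counting_le (counting_mono · h)

theorem HasDensityZero.union (hA : HasDensityZero A) (hB : HasDensityZero B) :
    HasDensityZero (A ∪ B) := by
  refine squeeze_zero (densityRatio_nonneg _) (fun n => ?_) (by simpa using hA.add hB)
  rw [densityRatio, densityRatio, densityRatio, ← add_div]
  exact div_le_div_of_nonneg_right (by exact_mod_cast counting_union_le A B n) n.cast_nonneg

theorem HasDensityZero.shift (hA : HasDensityZero A) (a : ℕ) :
    HasDensityZero {x | a < x ∧ x - a ∈ A} :=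
  hA.of_counting_le (counting_shift_le A · a)

theorem Set.Finite.hasDensityZero (hA : A.Finite) : HasDensityZero A := by
  have hbound (n : ℕ) : (counting A n : ℝ) ≤ hA.toFinset.card := by
    exact_mod_cast Finset.card_le_card fun m hm => hA.mem_toFinset.2 (Finset.mem_filter.1 hm).2
  exact squeeze_zero (densityRatio_nonneg A)
    (fun n => div_le_div_of_nonneg_right (hbound n) n.cast_nonneg)
    (tendsto_const_nhds.div_atTop tendsto_natCast_atTop_atTop)

theorem not_hasDensityZero_univ : ¬ HasDensityZero univ := by
  have hone : ∀ n ≥ 1, densityRatio univ n = 1 := fun n hn => by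
    simp [densityRatio, counting, show (n : ℝ) ≠ 0 by positivity]
  exact fun h => one_ne_zero <| tendsto_nhds_unique
    (tendsto_const_nhds.congr' ((eventually_ge_atTop 1).mono fun n hn => (hone n hn).symm)) h

theorem sum_counting_le_of_pairwiseDisjoint {ι : Type*} {s : Finset ι} {S : ι → Set ℕ}
    (h : (s : Set ι).PairwiseDisjoint S) (n : ℕ) : ∑ i ∈ s, counting (S i) n ≤ n := by
  have hdisj : (s : Set ι).PairwiseDisjoint fun i => (Finset.Icc 1 n).filter (fun m => m ∈ S i) :=
    fun i hi j hj hij => Finset.disjoint_left.2 fun m hm hm' =>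
      Set.disjoint_left.1 (h hi hj hij) (Finset.mem_filter.1 hm).2 (Finset.mem_filter.1 hm').2
  calc ∑ i ∈ s, counting (S i) n
      = (s.biUnion fun i => (Finset.Icc 1 n).filter (fun m => m ∈ S i)).card :=
        (Finset.card_biUnion hdisj).symm
    _ ≤ (Finset.Icc 1 n).card :=
        Finset.card_le_card (Finset.biUnion_subset.2 fun _ _ => Finset.filter_subset _ _)
    _ = n := by simp

end Density

theorem Nat.eventually_gt_cofinite (a : ℕ) : ∀ᶠ y in cofinite, a < y := by
  rw [Nat.cofinite_eq_atTop]
  exact eventually_gt_atTop a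

def densityOneFilter : Filter ℕ :=
  comk HasDensityZero finite_empty.hasDensityZero (fun _ ht _ hst => ht.mono hst)
    fun _ hs _ ht => hs.union ht

theorem mem_densityOneFilter {C : Set ℕ} : C ∈ densityOneFilter ↔ HasDensityZero Cᶜ := .rfl

theorem compl_mem_densityOneFilter {D : Set ℕ} : Dᶜ ∈ densityOneFilter ↔ HasDensityZero D :=
  compl_mem_comk

theorem densityOneFilter_le_cofinite : densityOneFilter ≤ cofinite :=
  fun _ hs => mem_densityOneFilter.2 (mem_cofinite.1 hs).hasDensityZero

instance : densityOneFilter.NeBot := by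
  refine ⟨fun h => not_hasDensityZero_univ ?_⟩
  simpa using mem_densityOneFilter.1 (h ▸ mem_bot : ∅ ∈ densityOneFilter)

theorem eventually_sub_mem_of_mem_densityOneFilter {C : Set ℕ} (hC : C ∈ densityOneFilter)
    (a : ℕ) : ∀ᶠ y in densityOneFilter, y - a ∈ C := by
  have hgt : ∀ᶠ y in densityOneFilter, a < y :=
    densityOneFilter_le_cofinite (Nat.eventually_gt_cofinite a)
  filter_upwards [hgt, compl_mem_densityOneFilter.2 ((mem_densityOneFilter.1 hC).shift a)]
    with y hay hy
  by_contra hyC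
  exact hy ⟨hay, hyC⟩

theorem diffSet_mono {X Y : Set ℕ} (h : X ⊆ Y) : diffSet X ⊆ diffSet Y := by
  rintro _ ⟨x, hx, x', hx', hlt, rfl⟩
  exact ⟨x, h hx, x', h hx', hlt, rfl⟩

theorem Set.Infinite.diffSet_nonempty {X : Set ℕ} (hX : X.Infinite) : (diffSet X).Nonempty := by
  obtain ⟨x, hx⟩ := hX.nonempty
  obtain ⟨x', hx', hlt⟩ := hX.exists_gt x
  exact ⟨x' - x, x, hx, x', hx', hlt, rfl⟩

theorem exists_infinite_diffSet_subset {f : Filter ℕ} [f.NeBot] (hf : f ≤ cofinite)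
    {P C : Set ℕ} (hP : ∀ᶠ y in f, y ∈ P) (hC : ∀ x ∈ P, ∀ᶠ y in f, y - x ∈ C) :
    ∃ Y ⊆ P, Y.Infinite ∧ diffSet Y ⊆ C := by
  have hgt (x : ℕ) : ∀ᶠ y in f, x < y := hf (Nat.eventually_gt_cofinite x)
  obtain ⟨g, hgP, hg⟩ := exists_seq_of_forall_finset_exists (· ∈ P)
    (fun x y => x < y ∧ y - x ∈ C) fun s hs =>
      (hP.and (s.eventually_all.2 fun x hx => (hgt x).and (hC x (hs x hx)))).exists
  have hmono : StrictMono g := fun m n h => (hg m n h).1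
  refine ⟨range g, range_subset_iff.2 hgP, infinite_range_of_injective hmono.injective, ?_⟩
  rintro _ ⟨_, ⟨m, rfl⟩, _, ⟨n, rfl⟩, hlt, rfl⟩
  exact (hg m n (hmono.lt_iff_lt.1 hlt)).2

theorem exists_infinite_diffSet_subset_or_subset_compl (A : Set ℕ) {X : Set ℕ}
    (hX : X.Infinite) : ∃ Y ⊆ X, Y.Infinite ∧ (diffSet Y ⊆ A ∨ diffSet Y ⊆ Aᶜ) := by
  have := hX.cofinite_inf_principal_neBot
  set p := Ultrafilter.of (cofinite ⊓ 𝓟 X)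
  have hp : (p : Filter ℕ) ≤ cofinite ⊓ 𝓟 X := Ultrafilter.of_le _
  have hXp : X ∈ p := (hp.trans inf_le_right) (mem_principal_self X)
  -- colour `x` by whether `y - x ∈ A` for `p`-almost every `y`; a greedy sequence inside the
  -- `p`-large colour class is then homogeneous
  rcases p.mem_or_compl_mem {x | {y | y - x ∈ A} ∈ p} with hS | hS
  · obtain ⟨Y, hYX, hY, hYA⟩ := exists_infinite_diffSet_subset (hp.trans inf_le_left)
      (inter_mem hXp hS) fun x hx => hx.2
    exact ⟨Y, hYX.trans inter_subset_left, hY, Or.inl hYA⟩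
  · obtain ⟨Y, hYX, hY, hYA⟩ := exists_infinite_diffSet_subset (hp.trans inf_le_left)
      (C := Aᶜ) (inter_mem hXp hS) fun x hx => p.compl_mem_iff_notMem.2 hx.2
    exact ⟨Y, hYX.trans inter_subset_left, hY, Or.inr hYA⟩

/-- By Ramsey's theorem its members are exactly the Δ*-sets, the sets meeting every Δ-set;
this hereditary form makes closure under intersection immediate. -/
def deltaStarFilter : Filter ℕ where
  sets := {B | ∀ X : Set ℕ, X.Infinite → ∃ Y ⊆ X, Y.Infinite ∧ diffSet Y ⊆ B}
  univ_sets X hX := ⟨X, subset_rfl, hX, subset_univ _⟩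
  sets_of_superset hB hBC X hX :=
    (hB X hX).imp fun _ ⟨hYX, hY, hYB⟩ => ⟨hYX, hY, hYB.trans hBC⟩
  inter_sets {B B'} hB hB' X hX := by
    obtain ⟨Y, hYX, hY, hYB⟩ := hB X hX
    obtain ⟨Z, hZY, hZ, hZB'⟩ := hB' Y hY
    exact ⟨Z, hZY.trans hYX, hZ, subset_inter ((diffSet_mono hZY).trans hYB) hZB'⟩

theorem compl_mem_deltaStarFilter {A : Set ℕ} (hA : ¬ IsDeltaSet A) : Aᶜ ∈ deltaStarFilter :=
  fun X hX => by
    obtain ⟨Y, hYX, hY, hYA | hYA⟩ := exists_infinite_diffSet_subset_or_subset_compl A hX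
    · exact absurd ⟨Y, hY, hYA⟩ hA
    · exact ⟨Y, hYX, hY, hYA⟩

instance : (deltaStarFilter ⊓ densityOneFilter).NeBot := by
  refine inf_neBot_iff.2 fun B hB C hC => ?_
  obtain ⟨Z, -, hZ, hZC⟩ := exists_infinite_diffSet_subset densityOneFilter_le_cofinite
    univ_mem fun x _ => eventually_sub_mem_of_mem_densityOneFilter hC x
  obtain ⟨Y, hYZ, hY, hYB⟩ := hB Z hZ
  obtain ⟨d, hd⟩ := hY.diffSet_nonempty
  exact ⟨d, hYB hd, hZC (diffSet_mono hYZ hd)⟩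

theorem not_pairwiseDisjoint_preimage_add {A : Set ℕ} {ι : Type*} (s : Finset ι) (t : ι → ℕ)
    (hs : 1 < s.card * upperDensity A) :
    ¬ (s : Set ι).PairwiseDisjoint fun i => (· + t i) ⁻¹' A := by
  intro hdisj
  have hk : (0 : ℝ) < s.card := by
    by_contra! h
    nlinarith [upperDensity_nonneg A]
  have hcount (n : ℕ) : s.card * counting A n ≤ ∑ i ∈ s, t i + n :=
    calc s.card * counting A n = ∑ _i ∈ s, counting A n := by rw [Finset.sum_const, smul_eq_mul]
      _ ≤ ∑ i ∈ s, (t i + counting ((· + t i) ⁻¹' A) n) :=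
          Finset.sum_le_sum fun i _ => counting_le_add_counting_preimage_add A n (t i)
      _ ≤ ∑ i ∈ s, t i + n := by
          rw [Finset.sum_add_distrib]
          exact Nat.add_le_add_left (sum_counting_le_of_pairwiseDisjoint hdisj n) _
  have hud : upperDensity A ≤ 1 / s.card :=
    upperDensity_le_of_counting_le (C := (∑ i ∈ s, t i : ℕ) / s.card) fun n => by
      rw [div_mul_eq_mul_div, one_mul, ← add_div, le_div_iff₀ hk]
      have := (Nat.cast_le (α := ℝ)).2 (hcount n)
      push_cast at this ⊢
      linarith
  rw [le_div_iff₀ hk] at hud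
  linarith

theorem IsDeltaSet.exists_add_mul_mem {A : Set ℕ} (hA : IsDeltaSet A) (hd : 0 < upperDensity A)
    (ℓ : ℕ) : ∃ b c : ℕ, b ∈ A ∧ c ∈ A ∧ b + ℓ * c ∈ A := by
  obtain ⟨X, hX, hXA⟩ := hA
  obtain ⟨k, hk⟩ := exists_nat_gt (upperDensity A)⁻¹
  obtain ⟨s, hsX, rfl⟩ := hX.exists_subset_card_eq k
  have hs : 1 < s.card * upperDensity A := by rwa [inv_lt_iff_one_lt_mul₀ hd] at hk
  have hne := not_pairwiseDisjoint_preimage_add s (ℓ * ·) hs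
  simp only [Set.PairwiseDisjoint, Set.Pairwise, not_forall, Set.not_disjoint_iff] at hne
  obtain ⟨x, hx, y, hy, hxy, b, hbx, hby⟩ := hne
  wlog hlt : x < y generalizing x y
  · exact this y hy x hx (Ne.symm hxy) hby hbx ((Ne.symm hxy).lt_of_le (not_lt.1 hlt))
  refine ⟨b + ℓ * x, y - x, hbx, hXA ⟨x, hsX hx, y, hsX hy, hlt, rfl⟩, ?_⟩
  rwa [add_assoc, ← mul_add, Nat.add_sub_cancel' hlt.le]

theorem stmt7 :
    ∃ U : Ultrafilter ℕ,
      (∀ A ∈ U, IsDeltaSet A ∧ 0 < upperDensity A) ∧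
      (∀ A ∈ U, ∀ ℓ : ℕ, ∃ b c : ℕ, b ∈ A ∧ c ∈ A ∧ b + ℓ * c ∈ A) := by
  obtain ⟨U, hU⟩ := Ultrafilter.exists_le (deltaStarFilter ⊓ densityOneFilter)
  have hcompl {A : Set ℕ} (hA : A ∈ U) (hAc : Aᶜ ∈ deltaStarFilter ⊓ densityOneFilter) : False :=
    U.compl_mem_iff_notMem.1 (hU hAc) hA
  have hmem (A : Set ℕ) (hA : A ∈ U) : IsDeltaSet A ∧ 0 < upperDensity A :=
    ⟨by_contra fun hΔ => hcompl hA (mem_inf_of_left (compl_mem_deltaStarFilter hΔ)),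
      (upperDensity_nonneg A).lt_of_ne fun h0 => hcompl hA (mem_inf_of_right
        (compl_mem_densityOneFilter.2 (hasDensityZero_of_upperDensity_eq_zero h0.symm)))⟩
  exact ⟨U, hmem, fun A hA ℓ => (hmem A hA).1.exists_add_mul_mem (hmem A hA).2 ℓ⟩
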